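/- arXiv:1406.6398 — 5 statements merged into one kernel-verified Lean document; each statement's English description precedes it below -/
import Mathlib

section
/- For any finite metric space (X,d) and any positive integer k, there is at most one perfect k-clustering of (X,d): if C and C' are both perfect clusterings of X into k nonempty clusters, then C = C' (they induce the same equivalence relation on X). -/
/-!
If two perfect clusterings `c`, `c'` both split some pair, say `c'` joins `a, b` while `c`
separates them, and `c` joins `x, y` while `c'` separates them, then perfection of `c` gives
`d x y < d a b` and perfection of `c'` gives `d a b < d x y`. So one clustering refines the
other, and a refinement of a partition into `k` blocks by another partition into `k` blocks
is the partition itself.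
-/

open Function

def IsPerfectClustering {X α ι : Type*} [Preorder α] (d : X → X → α) (c : X → ι) : Prop :=
  ∀ x y w z, c x = c y → c w ≠ c z → d x y < d w z

theorem Setoid.ker_eq_of_le_of_surjective {X ι : Type*} [Finite ι] {c c' : X → ι}
    (hc : Surjective c) (hc' : Surjective c') (h : ker c' ≤ ker c) : ker c' = ker c := by
  obtain ⟨g, hg⟩ := hc'.hasRightInverse
  have hfactor : ∀ x, c (g (c' x)) = c x := fun x => h (hg (c' x))
  have hinj : Injective (c ∘ g) := Finite.injective_iff_surjective.mpr fun i => by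
    obtain ⟨x, rfl⟩ := hc i
    exact ⟨c' x, hfactor x⟩
  refine le_antisymm h fun x y hxy => hinj ?_
  simpa only [comp_apply, hfactor] using Setoid.ker_def.mp hxy

theorem IsPerfectClustering.ker_le_or_le {X α ι κ : Type*} [Preorder α] {d : X → X → α}
    {c : X → ι} {c' : X → κ} (hc : IsPerfectClustering d c) (hc' : IsPerfectClustering d c') :
    Setoid.ker c ≤ Setoid.ker c' ∨ Setoid.ker c' ≤ Setoid.ker c := by
  refine or_iff_not_imp_left.mpr fun hnot => Setoid.le_def.mpr fun {a b} hab => ?_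
  obtain ⟨x, y, hxy, hxy'⟩ : ∃ x y, c x = c y ∧ c' x ≠ c' y := by
    simpa only [Setoid.le_def, Setoid.ker_def, not_forall, exists_prop] using hnot
  by_contra hab'
  exact lt_asymm (hc x y a b hxy hab') (hc' a b x y hab hxy')

theorem perfect_clustering_unique_general {X : Type*} {k : ℕ}
    (d : X → X → ℝ)
    (c c' : X → Fin k)
    (hsurj : Function.Surjective c) (hsurj' : Function.Surjective c')
    (hperf : ∀ x y w z : X, c x = c y → c w ≠ c z → d x y < d w z)
    (hperf' : ∀ x y w z : X, c' x = c' y → c' w ≠ c' z → d x y < d w z) :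
    ∀ x y : X, c x = c y ↔ c' x = c' y := by
  have hker : Setoid.ker c = Setoid.ker c' := by
    rcases IsPerfectClustering.ker_le_or_le hperf hperf' with h | h
    · exact Setoid.ker_eq_of_le_of_surjective hsurj' hsurj h
    · exact (Setoid.ker_eq_of_le_of_surjective hsurj hsurj' h).symm
  exact Setoid.ext_iff.mp hker

/-- a finite space with a symmetric distance has at most one perfect
`k`-clustering: any two perfect clusterings into `k` nonempty clusters induce the
same equivalence relation on the points. -/
theorem perfect_clustering_unique {X : Type*} [Fintype X] {k : ℕ} (hk : 0 < k)
    (d : X → X → ℝ) (hsymm : ∀ x y, d x y = d y x) (hrefl : ∀ x, d x x = 0)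
    (c c' : X → Fin k)
    (hsurj : Function.Surjective c) (hsurj' : Function.Surjective c')
    (hperf : ∀ x y w z : X, c x = c y → c w ≠ c z → d x y < d w z)
    (hperf' : ∀ x y w z : X, c' x = c' y → c' w ≠ c' z → d x y < d w z) :
    ∀ x y : X, c x = c y ↔ c' x = c' y :=
  perfect_clustering_unique_general d c c' hsurj hsurj' hperf hperf'
end

section
/- Let x_o, x_1, ..., x_M, x_1', ..., x_M' be an M-configuration in a metric space (X,d). Fix an index 1 ≤ j ≤ M and a subset S ⊆ {1,...,M} with |S| > 1. Then the finite set A = {x_o, x_j'} ∪ {x_i : i ∈ S} admits a nice 2-clustering if and only if j ∉ S. -/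
/-!
Everything follows from the rule that, seen from any point `p`, its own cluster is strictly
closer than the other one. If `j ∉ S`, the point `x_o` is at distance `> 3/2` from every other
point while those are pairwise within `3/2`, so `{x_o}` splits off. If `j ∈ S` and `i ∈ S`
with `i ≠ j`, farthest points must be separated: `x_o` from `x_i` and `x'_j` from `x_j`. So one
of `x_j, x'_j` shares the cluster of `x_o`; but from that point `x_i` is closer than `x_o`,
which drags `x_i` into the cluster of `x_o` as well, a contradiction.
-/

/-- An `M`-configuration in a metric space: points `xo`, `x 0, …, x (M-1)`,
`x' 0, …, x' (M-1)` with the prescribed distance constraints (these force all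
`2M+1` points to be distinct and all interpoint distances to lie in `[1,2]`). -/
def IsMConfiguration {X : Type*} [MetricSpace X] {M : ℕ}
    (xo : X) (x x' : Fin M → X) : Prop :=
  (∀ i, dist xo (x i) ∈ Set.Ioc (3/2 : ℝ) 2 ∧ dist xo (x' i) ∈ Set.Ioc (3/2 : ℝ) 2) ∧
  (∀ i j, i ≠ j → dist (x i) (x j) ∈ Set.Icc (1 : ℝ) (3/2) ∧
      dist (x' i) (x' j) ∈ Set.Icc (1 : ℝ) (3/2) ∧
      dist (x i) (x' j) ∈ Set.Icc (1 : ℝ) (3/2)) ∧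
  (∀ i, dist (x i) (x' i) > dist xo (x i) ∧ dist (x i) (x' i) ≤ 2)

/-- `{C₁, C₂}` is a nice 2-clustering of the finite set `A`. -/
def IsNiceTwoClustering {X : Type*} [MetricSpace X] [DecidableEq X]
    (A C₁ C₂ : Finset X) : Prop :=
  C₁ ∪ C₂ = A ∧ Disjoint C₁ C₂ ∧ C₁.Nonempty ∧ C₂.Nonempty ∧
  ∀ p ∈ A, ∀ q ∈ A, ∀ r ∈ A,
    ((p ∈ C₁ ∧ q ∈ C₁) ∨ (p ∈ C₂ ∧ q ∈ C₂)) →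
    ((p ∈ C₁ ∧ r ∈ C₂) ∨ (p ∈ C₂ ∧ r ∈ C₁)) →
    dist q p < dist r p

namespace IsNiceTwoClustering

variable {X : Type*} [MetricSpace X] [DecidableEq X] {A C₁ C₂ : Finset X} {p q r : X}

theorem dist_lt (h : IsNiceTwoClustering A C₁ C₂) (hp : p ∈ A) (hq : q ∈ A) (hr : r ∈ A)
    (hpq : q ∈ C₁ ↔ p ∈ C₁) (hpr : ¬(r ∈ C₁ ↔ p ∈ C₁)) : dist q p < dist r p := by
  obtain ⟨hU, hD, -, -, hnice⟩ := h
  have hmem : ∀ a ∈ A, a ∈ C₂ ↔ a ∉ C₁ := fun a ha =>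
    ⟨fun h₂ h₁ => Finset.disjoint_left.mp hD h₁ h₂,
      fun h₁ => (Finset.mem_union.mp (hU ▸ ha)).resolve_left h₁⟩
  refine hnice p hp q hq r hr ?_ ?_ <;> simp only [hmem p hp, hmem q hq, hmem r hr] <;> tauto

theorem mem_iff_of_dist_le (h : IsNiceTwoClustering A C₁ C₂) (hp : p ∈ A) (hq : q ∈ A)
    (hr : r ∈ A) (hle : dist r p ≤ dist q p) (hpq : q ∈ C₁ ↔ p ∈ C₁) : r ∈ C₁ ↔ p ∈ C₁ := by
  by_contra hpr
  exact (h.dist_lt hp hq hr hpq hpr).not_ge hle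

theorem exists_mem_not_iff (h : IsNiceTwoClustering A C₁ C₂) (p : X) :
    ∃ r ∈ A, ¬(r ∈ C₁ ↔ p ∈ C₁) := by
  obtain ⟨hU, hD, ⟨r₁, hr₁⟩, ⟨r₂, hr₂⟩, -⟩ := h
  by_cases hp : p ∈ C₁
  · exact ⟨r₂, hU ▸ Finset.mem_union_right _ hr₂, by
      simp [hp, Finset.disjoint_right.mp hD hr₂]⟩
  · exact ⟨r₁, hU ▸ Finset.mem_union_left _ hr₁, by simp [hp, hr₁]⟩

theorem not_mem_iff_of_farthest (h : IsNiceTwoClustering A C₁ C₂) (hp : p ∈ A) (hq : q ∈ A)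
    (hfar : ∀ r ∈ A, dist r p ≤ dist q p) : ¬(q ∈ C₁ ↔ p ∈ C₁) := fun hpq =>
  have ⟨r, hr, hpr⟩ := h.exists_mem_not_iff p
  hpr (h.mem_iff_of_dist_le hp hq hr (hfar r hr) hpq)

end IsNiceTwoClustering

theorem isNiceTwoClustering_singleton_insert {X : Type*} [MetricSpace X] [DecidableEq X]
    {p : X} {B : Finset X} (hB : B.Nonempty) (hclose : ∀ a ∈ B, ∀ b ∈ B, dist b a < dist p a) :
    IsNiceTwoClustering (insert p B) {p} B := by
  have hpB : p ∉ B := fun hp => (hclose p hp p hp).false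
  refine ⟨(Finset.insert_eq p B).symm, Finset.disjoint_singleton_left.mpr hpB,
    Finset.singleton_nonempty p, hB, ?_⟩
  rintro a - b - c - (⟨ha, hb⟩ | ⟨ha, hb⟩) (⟨ha', hc⟩ | ⟨ha', hc⟩)
  · rw [Finset.mem_singleton.mp ha, Finset.mem_singleton.mp hb, dist_self, dist_comm]
    exact dist_nonneg.trans_lt (hclose c hc c hc)
  · exact absurd (Finset.mem_singleton.mp ha ▸ ha') hpB
  · exact absurd (Finset.mem_singleton.mp ha' ▸ ha) hpB
  · rw [Finset.mem_singleton.mp hc]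
    exact hclose a ha b hb

namespace IsMConfiguration

variable {X : Type*} [MetricSpace X] {M : ℕ} {xo : X} {x x' : Fin M → X} {i j : Fin M}

theorem three_halves_lt_dist_x (h : IsMConfiguration xo x x') (i : Fin M) :
    3 / 2 < dist xo (x i) :=
  (h.1 i).1.1

theorem three_halves_lt_dist_x' (h : IsMConfiguration xo x x') (i : Fin M) :
    3 / 2 < dist xo (x' i) :=
  (h.1 i).2.1

theorem dist_x_x_le (h : IsMConfiguration xo x x') (hij : i ≠ j) : dist (x i) (x j) ≤ 3 / 2 :=
  (h.2.1 i j hij).1.2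

theorem dist_x_x'_le (h : IsMConfiguration xo x x') (hij : i ≠ j) :
    dist (x i) (x' j) ≤ 3 / 2 :=
  (h.2.1 i j hij).2.2.2

theorem dist_xo_x_lt_dist_x_x' (h : IsMConfiguration xo x x') (i : Fin M) :
    dist xo (x i) < dist (x i) (x' i) :=
  (h.2.2 i).1

variable [DecidableEq X] {S : Finset (Fin M)} {a b : X}

theorem three_halves_lt_dist_of_mem (h : IsMConfiguration xo x x')
    (ha : a ∈ insert (x' j) (S.image x)) : 3 / 2 < dist xo a := by
  rcases Finset.mem_insert.mp ha with rfl | ha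
  · exact h.three_halves_lt_dist_x' j
  · obtain ⟨k, -, rfl⟩ := Finset.mem_image.mp ha
    exact h.three_halves_lt_dist_x k

theorem dist_le_of_mem_image (h : IsMConfiguration xo x x') (hb : b ∈ S.image x) (i : Fin M) :
    dist b (x i) ≤ 3 / 2 := by
  obtain ⟨k, -, rfl⟩ := Finset.mem_image.mp hb
  rcases eq_or_ne k i with rfl | hki
  · norm_num
  · exact h.dist_x_x_le hki

theorem dist_le_of_mem_of_ne (h : IsMConfiguration xo x x') (hij : i ≠ j)
    (hb : b ∈ insert (x' j) (S.image x)) : dist b (x i) ≤ 3 / 2 := by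
  rcases Finset.mem_insert.mp hb with rfl | hb
  · rw [dist_comm]
    exact h.dist_x_x'_le hij
  · exact h.dist_le_of_mem_image hb i

theorem dist_le_of_not_mem (h : IsMConfiguration xo x x') (hjS : j ∉ S)
    (ha : a ∈ insert (x' j) (S.image x)) (hb : b ∈ insert (x' j) (S.image x)) :
    dist b a ≤ 3 / 2 := by
  have hne : ∀ k ∈ S, k ≠ j := fun k hk hkj => hjS (hkj ▸ hk)
  rcases Finset.mem_insert.mp ha with rfl | ha
  · rcases Finset.mem_insert.mp hb with rfl | hb
    · norm_num
    · obtain ⟨k, hk, rfl⟩ := Finset.mem_image.mp hb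
      exact h.dist_x_x'_le (hne k hk)
  · obtain ⟨k, hk, rfl⟩ := Finset.mem_image.mp ha
    exact h.dist_le_of_mem_of_ne (hne k hk) hb

theorem not_isNiceTwoClustering_of_mem (h : IsMConfiguration xo x x') (hjS : j ∈ S)
    (hiS : i ∈ S) (hij : i ≠ j) {C₁ C₂ : Finset X} :
    ¬IsNiceTwoClustering (insert xo (insert (x' j) (S.image x))) C₁ C₂ := by
  intro hc
  have hxo : xo ∈ insert xo (insert (x' j) (S.image x)) := Finset.mem_insert_self _ _
  have hB : ∀ {b}, b ∈ insert (x' j) (S.image x) → b ∈ insert xo (insert (x' j) (S.image x)) :=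
    Finset.mem_insert_of_mem
  have hx' := hB (Finset.mem_insert_self (x' j) _)
  have hx : ∀ {k}, k ∈ S → x k ∈ insert xo (insert (x' j) (S.image x)) := fun hk =>
    hB (Finset.mem_insert_of_mem (Finset.mem_image_of_mem x hk))
  have hxi_xo : ¬(xo ∈ C₁ ↔ x i ∈ C₁) := by
    refine hc.not_mem_iff_of_farthest (hx hiS) hxo fun r hr => ?_
    rcases Finset.mem_insert.mp hr with rfl | hr
    · exact le_rfl
    · linarith [h.dist_le_of_mem_of_ne hij hr, h.three_halves_lt_dist_x i]
  have hxj_x'j : ¬(x' j ∈ C₁ ↔ x j ∈ C₁) := by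
    refine hc.not_mem_iff_of_farthest (hx hjS) hx' fun r hr => ?_
    have hxo_lt := h.dist_xo_x_lt_dist_x_x' j
    rw [dist_comm (x' j)]
    rcases Finset.mem_insert.mp hr with rfl | hr
    · exact hxo_lt.le
    rcases Finset.mem_insert.mp hr with rfl | hr
    · rw [dist_comm]
    · linarith [h.dist_le_of_mem_image hr j, h.three_halves_lt_dist_x j]
  have hxj : (xo ∈ C₁ ↔ x j ∈ C₁) → (x i ∈ C₁ ↔ x j ∈ C₁) :=
    hc.mem_iff_of_dist_le (hx hjS) hxo (hx hiS) <| by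
      linarith [h.dist_x_x_le hij, h.three_halves_lt_dist_x j]
  have hx'j : (xo ∈ C₁ ↔ x' j ∈ C₁) → (x i ∈ C₁ ↔ x' j ∈ C₁) :=
    hc.mem_iff_of_dist_le hx' hxo (hx hiS) <| by
      linarith [h.dist_x_x'_le hij, h.three_halves_lt_dist_x' j]
  tauto

end IsMConfiguration

/-- for an `M`-configuration, an index `j` and `S ⊆ {1,…,M}` with `|S| > 1`,
the set `A = {x_o, x_j'} ∪ {x_i : i ∈ S}` has a nice 2-clustering iff `j ∉ S`. -/
theorem mconfiguration_nice_two_clustering_iff {X : Type*} [MetricSpace X] [DecidableEq X]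
    {M : ℕ} (xo : X) (x x' : Fin M → X) (hconf : IsMConfiguration xo x x')
    (j : Fin M) (S : Finset (Fin M)) (hS : 1 < S.card) :
    (∃ C₁ C₂ : Finset X,
        IsNiceTwoClustering (insert xo (insert (x' j) (S.image x))) C₁ C₂) ↔ j ∉ S := by
  constructor
  · rintro ⟨C₁, C₂, hc⟩ hjS
    obtain ⟨i, hiS, hij⟩ := Finset.exists_mem_ne hS j
    exact hconf.not_isNiceTwoClustering_of_mem hjS hiS hij hc
  · intro hjS
    exact ⟨_, _, isNiceTwoClustering_singleton_insert ⟨x' j, Finset.mem_insert_self _ _⟩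
      fun a ha b hb => (hconf.dist_le_of_not_mem hjS ha hb).trans_lt
        (hconf.three_halves_lt_dist_of_mem ha)⟩
end

section
/- Suppose C = {C_1,...,C_k} is a clustering of a finite set X with cores C_1^o,...,C_k^o, and let β = min_i |C_i^o| / |X|. If T is a uniformly random subset of X of size ℓ ≥ k (sampled without replacement), then with probability at least 1 - k·e^{-βℓ}, T intersects the core of every cluster, and hence the nearest-center clustering induced by T is a refinement of C. -/
/-!
A uniform `ℓ`-subset of an `n`-set misses a fixed set of `m` points with probability
`C(n-m, ℓ) / C(n, ℓ) ≤ (1 - m/n)^ℓ ≤ e^{-mℓ/n}`, so a union bound over the `k` cores, each of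
relative size at least `β`, leaves probability at least `1 - k e^{-βℓ}` that `T` meets every
core. In that case the nearest point `t ∈ T` to any `x ∈ C_i` lies in `C_i`: a point of `T` in
the core of `C_i` is strictly closer to `x` than every point outside `C_i`.
-/

open scoped Classical

open Finset Real

namespace Nat

theorem descFactorial_mul_pow_le_pow_mul_descFactorial {a b : ℕ} (hab : a ≤ b) (ℓ : ℕ) :
    a.descFactorial ℓ * b ^ ℓ ≤ a ^ ℓ * b.descFactorial ℓ := by
  induction ℓ with
  | zero => simp
  | succ ℓ ih =>
    have step : (a - ℓ) * b ≤ a * (b - ℓ) := by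
      rw [Nat.sub_mul, Nat.mul_sub]
      exact Nat.sub_le_sub_left (by rw [mul_comm a]; exact Nat.mul_le_mul_left ℓ hab) _
    calc a.descFactorial (ℓ + 1) * b ^ (ℓ + 1)
        = ((a - ℓ) * b) * (a.descFactorial ℓ * b ^ ℓ) := by
          rw [descFactorial_succ, pow_succ]; ring
      _ ≤ (a * (b - ℓ)) * (a ^ ℓ * b.descFactorial ℓ) := Nat.mul_le_mul step ih
      _ = a ^ (ℓ + 1) * b.descFactorial (ℓ + 1) := by
          rw [descFactorial_succ, pow_succ]; ring

theorem choose_mul_pow_le_pow_mul_choose {a b : ℕ} (hab : a ≤ b) (ℓ : ℕ) :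
    a.choose ℓ * b ^ ℓ ≤ a ^ ℓ * b.choose ℓ := by
  have h := descFactorial_mul_pow_le_pow_mul_descFactorial hab ℓ
  rw [descFactorial_eq_factorial_mul_choose, descFactorial_eq_factorial_mul_choose] at h
  exact Nat.le_of_mul_le_mul_left (by linarith) ℓ.factorial_pos

end Nat

theorem choose_sub_le_exp_mul_choose {n m : ℕ} (hmn : m ≤ n) (ℓ : ℕ) :
    ((n - m).choose ℓ : ℝ) ≤ exp (-(m / n * ℓ)) * n.choose ℓ := by
  rcases Nat.eq_zero_or_pos n with rfl | hn
  · obtain rfl := Nat.le_zero.mp hmn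
    simp
  have hnR : (0 : ℝ) < n := Nat.cast_pos.mpr hn
  have hsub : ((n - m : ℕ) : ℝ) ≤ n * exp (-(m / n)) := by
    calc ((n - m : ℕ) : ℝ) = n * (1 - m / n) := by
          rw [Nat.cast_sub hmn]; field_simp
      _ ≤ n * exp (-(m / n)) := by gcongr; exact one_sub_le_exp_neg _
  have key : ((n - m).choose ℓ : ℝ) * (n : ℝ) ^ ℓ ≤ ((n - m : ℕ) : ℝ) ^ ℓ * n.choose ℓ := by
    exact_mod_cast Nat.choose_mul_pow_le_pow_mul_choose (Nat.sub_le n m) ℓ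
  have hexp : exp (-(m / n * ℓ)) = exp (-(m / n)) ^ ℓ := by
    rw [← exp_nat_mul]; ring_nf
  refine le_of_mul_le_mul_right ?_ (pow_pos hnR ℓ)
  calc ((n - m).choose ℓ : ℝ) * (n : ℝ) ^ ℓ ≤ ((n - m : ℕ) : ℝ) ^ ℓ * n.choose ℓ := key
    _ ≤ (n * exp (-(m / n))) ^ ℓ * n.choose ℓ := by gcongr
    _ = exp (-(m / n * ℓ)) * n.choose ℓ * (n : ℝ) ^ ℓ := by rw [hexp, mul_pow]; ring

namespace Finset

variable {α : Type*} [DecidableEq α]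

theorem card_powersetCard_filter_disjoint_le {s t : Finset α} (hts : t ⊆ s) (ℓ : ℕ) :
    (#{T ∈ s.powersetCard ℓ | Disjoint T t} : ℝ) ≤ exp (-(#t / #s * ℓ)) * (#s).choose ℓ := by
  have hsubset : {T ∈ s.powersetCard ℓ | Disjoint T t} ⊆ (s \ t).powersetCard ℓ := by
    intro T hT
    obtain ⟨hT, hdisj⟩ := mem_filter.mp hT
    obtain ⟨hTs, hcard⟩ := mem_powersetCard.mp hT
    exact mem_powersetCard.mpr ⟨subset_sdiff.mpr ⟨hTs, hdisj⟩, hcard⟩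
  have hcard := card_le_card hsubset
  rw [card_powersetCard, card_sdiff_of_subset hts] at hcard
  calc (#{T ∈ s.powersetCard ℓ | Disjoint T t} : ℝ) ≤ ((#s - #t).choose ℓ : ℝ) := by
        exact_mod_cast hcard
    _ ≤ _ := choose_sub_le_exp_mul_choose (card_le_card hts) ℓ

theorem card_powersetCard_filter_exists_disjoint_le {ι : Type*} [Fintype ι] {s : Finset α}
    {t : ι → Finset α} (hts : ∀ i, t i ⊆ s) {β : ℝ} (hβ : ∀ i, β ≤ #(t i) / #s) (ℓ : ℕ) :
    (#{T ∈ s.powersetCard ℓ | ∃ i, Disjoint T (t i)} : ℝ) ≤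
      Fintype.card ι * exp (-(β * ℓ)) * (#s).choose ℓ := by
  have hunion : {T ∈ s.powersetCard ℓ | ∃ i, Disjoint T (t i)} =
      univ.biUnion fun i => {T ∈ s.powersetCard ℓ | Disjoint T (t i)} := by
    ext T; simp
  have heach (i : ι) : (#{T ∈ s.powersetCard ℓ | Disjoint T (t i)} : ℝ) ≤
      exp (-(β * ℓ)) * (#s).choose ℓ := by
    refine (card_powersetCard_filter_disjoint_le (hts i) ℓ).trans ?_
    gcongr
    exact hβ i
  calc (#{T ∈ s.powersetCard ℓ | ∃ i, Disjoint T (t i)} : ℝ)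
      ≤ ∑ i, (#{T ∈ s.powersetCard ℓ | Disjoint T (t i)} : ℝ) := by
        rw [hunion]; exact_mod_cast card_biUnion_le
    _ ≤ ∑ _i : ι, exp (-(β * ℓ)) * (#s).choose ℓ := sum_le_sum fun i _ => heach i
    _ = Fintype.card ι * exp (-(β * ℓ)) * (#s).choose ℓ := by
        rw [sum_const, card_univ, nsmul_eq_mul, mul_assoc]

theorem one_sub_mul_exp_le_card_filter_forall_not_disjoint_div {ι : Type*} [Fintype ι]
    {s : Finset α} {t : ι → Finset α} (hts : ∀ i, t i ⊆ s) {β : ℝ}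
    (hβ : ∀ i, β ≤ #(t i) / #s) {ℓ : ℕ} (hℓ : ℓ ≤ #s) :
    1 - Fintype.card ι * exp (-(β * ℓ)) ≤
      #{T ∈ s.powersetCard ℓ | ∀ i, ¬Disjoint T (t i)} / #(s.powersetCard ℓ) := by
  have hsplit := card_filter_add_card_filter_not (s := s.powersetCard ℓ)
    (fun T => ∀ i, ¬Disjoint T (t i))
  simp only [not_forall, not_not] at hsplit
  have hbad := card_powersetCard_filter_exists_disjoint_le hts hβ ℓ
  have hpos : (0 : ℝ) < #(s.powersetCard ℓ) := by
    rw [card_powersetCard]; exact_mod_cast Nat.choose_pos hℓ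
  rw [le_div_iff₀ hpos, card_powersetCard]
  rw [card_powersetCard] at hsplit
  have hsplitR : (#{T ∈ s.powersetCard ℓ | ∀ i, ¬Disjoint T (t i)} : ℝ) +
      #{T ∈ s.powersetCard ℓ | ∃ i, Disjoint T (t i)} = (#s).choose ℓ := by
    exact_mod_cast hsplit
  linarith

end Finset

theorem mem_cluster_of_nearest_of_mem_core {α : Type*} [Dist α] {X C Co T : Finset α}
    (hcore : ∀ x ∈ C, ∀ z ∈ Co, ∀ y ∈ X, y ∉ C → dist x z < dist x y) (hTX : T ⊆ X)
    {x z t : α} (hx : x ∈ C) (hzT : z ∈ T) (hz : z ∈ Co) (ht : t ∈ T)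
    (hnear : ∀ s ∈ T, dist x t ≤ dist x s) : t ∈ C := by
  by_contra htC
  exact (hcore x hx z hz t (hTX ht) htC).not_ge (hnear z hzT)

theorem random_subset_hits_cores_and_refines_general {α : Type*} [MetricSpace α] [DecidableEq α]
    (X : Finset α) (k : ℕ) (hk : 0 < k) (C Co : Fin k → Finset α)
    (hcover : ∀ x ∈ X, ∃ i, x ∈ C i)
    (hsub : ∀ i, C i ⊆ X)
    (hcoreSub : ∀ i, Co i ⊆ C i)
    (hcore : ∀ i, ∀ x ∈ C i, ∀ z ∈ Co i, ∀ y ∈ X, y ∉ C i → dist x z < dist x y)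
    (β : ℝ)
    (hβ : β = (Finset.univ.inf' (@Finset.univ_nonempty (Fin k) _ ⟨⟨0, hk⟩⟩)
      fun i : Fin k => ((Co i).card : ℝ) / (X.card : ℝ)))
    (ℓ : ℕ) (hℓ : ℓ ≤ X.card) :
    1 - k * Real.exp (-(β * ℓ)) ≤
      (((X.powersetCard ℓ).filter (fun T =>
          (∀ i, ∃ t ∈ T, t ∈ Co i) ∧
          ∀ x ∈ X, ∀ t ∈ T, (∀ s ∈ T, dist x t ≤ dist x s) →
            ∃ i, x ∈ C i ∧ t ∈ C i)).card : ℝ) /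
        ((X.powersetCard ℓ).card : ℝ) := by
  have hβle (i : Fin k) : β ≤ #(Co i) / #X := hβ ▸ inf'_le _ (mem_univ i)
  have hhit := one_sub_mul_exp_le_card_filter_forall_not_disjoint_div
    (fun i => (hcoreSub i).trans (hsub i)) hβle hℓ
  rw [Fintype.card_fin] at hhit
  refine hhit.trans (div_le_div_of_nonneg_right ?_ (Nat.cast_nonneg _))
  refine Nat.cast_le.mpr (card_le_card fun T hT => ?_)
  simp only [mem_filter] at hT ⊢
  obtain ⟨hTP, hTmeets⟩ := hT
  have hTcores (i : Fin k) : ∃ z ∈ T, z ∈ Co i := not_disjoint_iff.mp (hTmeets i)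
  refine ⟨hTP, hTcores, fun x hx t ht hnear => ?_⟩
  obtain ⟨i, hxi⟩ := hcover x hx
  obtain ⟨z, hzT, hz⟩ := hTcores i
  exact ⟨i, hxi, mem_cluster_of_nearest_of_mem_core (hcore i) (mem_powersetCard.mp hTP).1
    hxi hzT hz ht hnear⟩

/-- let `C : Fin k → Finset α` be a clustering of the finite set `X` with
cores `Co i ⊆ C i` (every point of a cluster is strictly closer to every core point of
its cluster than to any point outside the cluster), and `β = min_i |Co i|/|X|`.  A
uniformly random size-`ℓ` subset `T` of `X` (`k ≤ ℓ ≤ |X|`) intersects every core — and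
hence the nearest-center clustering induced by `T` refines `C` — with probability at
least `1 - k e^{-βℓ}`. -/
theorem random_subset_hits_cores_and_refines {α : Type*} [MetricSpace α] [DecidableEq α]
    (X : Finset α) (k : ℕ) (hk : 0 < k) (C Co : Fin k → Finset α)
    (hcover : ∀ x ∈ X, ∃ i, x ∈ C i)
    (hsub : ∀ i, C i ⊆ X) (hdisj : ∀ i j, i ≠ j → Disjoint (C i) (C j))
    (hcoreSub : ∀ i, Co i ⊆ C i) (hcoreNe : ∀ i, (Co i).Nonempty)
    (hcore : ∀ i, ∀ x ∈ C i, ∀ z ∈ Co i, ∀ y ∈ X, y ∉ C i → dist x z < dist x y)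
    (β : ℝ)
    (hβ : β = (Finset.univ.inf' (@Finset.univ_nonempty (Fin k) _ ⟨⟨0, hk⟩⟩)
      fun i : Fin k => ((Co i).card : ℝ) / (X.card : ℝ)))
    (ℓ : ℕ) (hkℓ : k ≤ ℓ) (hℓ : ℓ ≤ X.card) :
    1 - k * Real.exp (-(β * ℓ)) ≤
      (((X.powersetCard ℓ).filter (fun T =>
          (∀ i, ∃ t ∈ T, t ∈ Co i) ∧
          ∀ x ∈ X, ∀ t ∈ T, (∀ s ∈ T, dist x t ≤ dist x s) →
            ∃ i, x ∈ C i ∧ t ∈ C i)).card : ℝ) /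
        ((X.powersetCard ℓ).card : ℝ) :=
  random_subset_hits_cores_and_refines_general X k hk C Co hcover hsub hcoreSub hcore β hβ ℓ hℓ
end

section
/- Lower bound on centers for nice clusterings: for every k ≥ 1 there exists a finite metric space (X,d) and a nice k-clustering C of X such that any set T ⊆ X of centers whose induced nearest-center partition is a refinement of every nice k-clustering consistent with the points seen so far must have |T| ≥ 2^{k-1}. Concretely, there is a metric space on 2^{k-1} points in which every point forms its own cluster in some nice k-clustering extension, forcing any consistent center set to contain all 2^{k-1} points. -/
/-- A cluster assignment `c : X → Fin k` is *nice*. -/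
def IsNice {X : Type*} [MetricSpace X] {k : ℕ} (c : X → Fin k) : Prop :=
  ∀ x y z : X, c x = c y → c x ≠ c z → dist y x < dist z x

/-!
Take the cube `Bool^(k-1)` with the ultrametric `2^(-j)`, `j` the first coordinate where two
points differ. Fix a point `x` and sort every other point by the first coordinate where it
differs from `x`; with `{x}` this gives `k` clusters. Over `Bool` each of them is a cylinder,
i.e. a closed ball about each of its points, and a partition into such balls is nice. As `x` is
alone in its cluster, its nearest center must be `x` itself, so a center set that is consistent
with all these clusterings contains every point.
-/

open Function Metric

theorem isNice_of_preimage_eq_closedBall {X : Type*} [MetricSpace X] {k : ℕ} {c : X → Fin k}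
    (h : ∀ p, ∃ ρ, c ⁻¹' {c p} = closedBall p ρ) : IsNice c := by
  intro p q r hpq hpr
  obtain ⟨ρ, hρ⟩ := h p
  have hq : q ∈ closedBall p ρ := hρ ▸ hpq.symm
  have hr : r ∉ closedBall p ρ := hρ ▸ fun h => hpr (Eq.symm h)
  exact (mem_closedBall.1 hq).trans_lt (not_le.1 hr)

theorem mem_of_singleton_cluster {X α : Type*} [MetricSpace X] {T : Finset X} (hT : T.Nonempty)
    {c : X → α} {x : X} (hx : ∀ y, c y = c x ↔ y = x)
    (hT_refines : ∀ t ∈ T, (∀ s ∈ T, dist x t ≤ dist x s) → c t = c x) : x ∈ T := by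
  obtain ⟨t, ht, hmin⟩ := T.exists_min_image (dist x) hT
  rwa [← (hx t).1 (hT_refines t ht hmin)]

namespace PiNat

theorem ne_and_firstDiff_eq_iff {E : ℕ → Type*} {x y : ∀ n, E n} {n : ℕ} :
    x ≠ y ∧ firstDiff x y = n ↔ x ∈ cylinder y n ∧ x n ≠ y n := by
  constructor
  · rintro ⟨hne, rfl⟩
    exact ⟨mem_cylinder_firstDiff x y, apply_firstDiff_ne hne⟩
  · rintro ⟨hcyl, hn⟩
    have hne : x ≠ y := fun h => hn (congrFun h n)
    refine ⟨hne, le_antisymm ?_ ((mem_cylinder_iff_le_firstDiff hne n).1 hcyl)⟩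
    by_contra! hlt
    exact hn (apply_eq_of_lt_firstDiff hlt)

theorem firstDiff_eq_iff_mem_cylinder {x p y : ℕ → Bool} (hp : p ≠ x) (hy : y ≠ x) :
    firstDiff y x = firstDiff p x ↔ y ∈ cylinder p (firstDiff p x + 1) := by
  set j := firstDiff p x
  obtain ⟨hp_cyl, hp_ne⟩ := ne_and_firstDiff_eq_iff.1 ⟨hp, rfl⟩
  have hy_sphere : firstDiff y x = j ↔ y ∈ cylinder x j ∧ y j ≠ x j := by
    rw [← ne_and_firstDiff_eq_iff, and_iff_right hy]
  rw [hy_sphere, ← mem_cylinder_iff_eq.1 hp_cyl]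
  simp only [mem_cylinder_iff, Nat.lt_succ_iff_lt_or_eq, or_imp, forall_and, forall_eq]
  exact and_congr_right fun _ =>
    ⟨fun hy_ne => (Bool.eq_not_of_ne hy_ne).trans (Bool.eq_not_of_ne hp_ne).symm,
      fun hy_eq => hy_eq ▸ hp_ne⟩

end PiNat

open PiNat

def BoolCube (m : ℕ) : Type := Fin m → Bool

namespace BoolCube

variable {m : ℕ}

instance : Fintype (BoolCube m) := inferInstanceAs (Fintype (Fin m → Bool))

theorem card : Fintype.card (BoolCube m) = 2 ^ m :=
  (Fintype.card_fun ..).trans (by simp)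

def padSeq (b : Bool) (f : BoolCube m) : ℕ → Bool :=
  fun i => if h : i < m then f ⟨i, h⟩ else b

theorem padSeq_injective (b : Bool) : Injective (padSeq (m := m) b) := fun f g h =>
  funext fun i => by simpa [padSeq] using congrFun h i

theorem padSeq_false_ne_padSeq_true (f g : BoolCube m) : padSeq false f ≠ padSeq true g :=
  fun h => by simpa [padSeq] using congrFun h m

theorem firstDiff_padSeq_le (f g : BoolCube m) :
    firstDiff (padSeq false f) (padSeq true g) ≤ m := by
  by_contra! h
  simpa [padSeq] using apply_eq_of_lt_firstDiff h

noncomputable instance : MetricSpace (BoolCube m) :=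
  MetricSpace.induced (padSeq false) (padSeq_injective false) PiNat.metricSpace

theorem mem_closedBall_iff_mem_cylinder (x y : BoolCube m) (n : ℕ) :
    y ∈ closedBall x ((1 / 2) ^ n) ↔ padSeq false y ∈ cylinder (padSeq false x) n :=
  letI := PiNat.dist (E := fun _ => Bool)
  mem_cylinder_iff_dist_le.symm

/-- Padding `x` with `true` and `y` with `false` makes the first difference at most `m`, with
equality exactly when `y = x`. -/
noncomputable def sphereLabel (x y : BoolCube m) : Fin (m + 1) :=
  ⟨firstDiff (padSeq false y) (padSeq true x), Nat.lt_succ_of_le (firstDiff_padSeq_le y x)⟩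

theorem coe_sphereLabel (x y : BoolCube m) :
    (sphereLabel x y : ℕ) = firstDiff (padSeq false y) (padSeq true x) :=
  rfl

theorem sphereLabel_eq_last_iff (x y : BoolCube m) : sphereLabel x y = Fin.last m ↔ y = x := by
  have h := ne_and_firstDiff_eq_iff (x := padSeq false y) (y := padSeq true x) (n := m)
  rw [and_iff_right (padSeq_false_ne_padSeq_true y x)] at h
  rw [Fin.ext_iff, coe_sphereLabel, Fin.val_last, h]
  refine ⟨fun hyx => funext fun i => ?_,
    fun hyx => hyx ▸ ⟨fun i hi => ?_, by simp [padSeq]⟩⟩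
  · simpa [padSeq] using hyx.1 i i.isLt
  · simp [padSeq, hi]

theorem sphereLabel_self (x : BoolCube m) : sphereLabel x x = Fin.last m :=
  (sphereLabel_eq_last_iff x x).2 rfl

theorem sphereLabel_surjective (x : BoolCube m) : Surjective (sphereLabel x) := by
  intro i
  refine ⟨(fun n => if (n : ℕ) < i then x n else !x n : Fin m → Bool), Fin.ext ?_⟩
  refine (ne_and_firstDiff_eq_iff.2 ⟨fun n hn => ?_, ?_⟩).2
  · simp [padSeq, hn, hn.trans_le (Nat.lt_succ_iff.1 i.isLt)]
  · by_cases hi : (i : ℕ) < m <;> simp [padSeq, hi]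

theorem isNice_sphereLabel (x : BoolCube m) : IsNice (sphereLabel x) := by
  refine isNice_of_preimage_eq_closedBall fun p => ⟨(1 / 2) ^ ((sphereLabel x p : ℕ) + 1), ?_⟩
  ext y
  rw [mem_closedBall_iff_mem_cylinder, coe_sphereLabel, ← firstDiff_eq_iff_mem_cylinder
    (padSeq_false_ne_padSeq_true p x) (padSeq_false_ne_padSeq_true y x)]
  exact Fin.ext_iff

end BoolCube

/-- lower bound on the number of centers.  For every `k ≥ 1` there is a
finite metric space on `2^(k-1)` points admitting a nice `k`-clustering, in which every
point is a singleton cluster of some nice `k`-clustering; consequently every nonempty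
center set `T` whose induced nearest-center partition is consistent with (refines) every
nice `k`-clustering must satisfy `|T| ≥ 2^(k-1)`, i.e. contain all the points. -/
theorem lower_bound_extra_centers :
    ∀ k : ℕ, 1 ≤ k →
      ∃ (X : Type) (_ : MetricSpace X) (_ : Fintype X),
        Fintype.card X = 2 ^ (k - 1) ∧
        (∃ c : X → Fin k, Function.Surjective c ∧ IsNice c) ∧
        (∀ x : X, ∃ c : X → Fin k, Function.Surjective c ∧ IsNice c ∧
            ∀ y : X, c y = c x ↔ y = x) ∧
        ∀ T : Finset X, T.Nonempty →
          (∀ c : X → Fin k, Function.Surjective c → IsNice c →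
            ∀ x t : X, t ∈ T → (∀ s ∈ T, dist x t ≤ dist x s) → c t = c x) →
          2 ^ (k - 1) ≤ T.card := by
  intro k hk
  obtain ⟨m, rfl⟩ : ∃ m, k = m + 1 := ⟨k - 1, by omega⟩
  have singleton_cluster (x : BoolCube m) : ∃ c : BoolCube m → Fin (m + 1),
      Surjective c ∧ IsNice c ∧ ∀ y, c y = c x ↔ y = x :=
    ⟨BoolCube.sphereLabel x, BoolCube.sphereLabel_surjective x, BoolCube.isNice_sphereLabel x,
      fun y => by rw [BoolCube.sphereLabel_self, BoolCube.sphereLabel_eq_last_iff]⟩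
  refine ⟨BoolCube m, inferInstance, inferInstance, by simpa using BoolCube.card, ?_,
    singleton_cluster, fun T hT hT_refines => ?_⟩
  · obtain ⟨c, hc, hc_nice, -⟩ := singleton_cluster (fun _ => false : Fin m → Bool)
    exact ⟨c, hc, hc_nice⟩
  · have hT_univ : Finset.univ ⊆ T := fun x _ => by
      obtain ⟨c, hc, hc_nice, hx⟩ := singleton_cluster x
      exact mem_of_singleton_cluster hT hx fun t => hT_refines c hc hc_nice x t
    simpa [BoolCube.card] using Finset.card_le_card hT_univ
end

section
/- Every nice clustering of a subset is a union of single-linkage clusters: if S is a finite metric space with a nice ℓ-clustering C (ℓ ≤ k), then each cluster of C corresponds to the leaf set of some node of the single-linkage tree on S at depth less than k; hence the set returned by Candidates(S) (one representative per node at depth < k) includes at least one representative from each cluster of C. -/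
/-!
Fix a cluster `C` of the nice clustering. Single linkage never merges a proper part `A ⊊ C`
with a block `B` outside `C`: if `(a, b)` is the closest pair realizing the merge, a point
`y ∈ C \ A` lies in another block, so `dist a b ≤ dist a y < dist a b` by niceness unless `b ∈ C`.
Hence every block ever formed is nested with or disjoint from every cluster, and the first block
containing `C` is `C` itself. A block strictly containing `C` is then a union of at least two
clusters; these blocks form a chain, so their numbers of clusters are distinct values in
`[2, ℓ]`, and the depth of `C` is at most `ℓ - 1 < k`.
-/

open scoped Classical

namespace SingleLinkage

open Finset

section Partitions

variable {α : Type*}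

structure IsPartition (P : Finset (Finset α)) : Prop where
  nonempty : ∀ B ∈ P, B.Nonempty
  exists_mem : ∀ x, ∃ B ∈ P, x ∈ B
  eq_of_mem : ∀ {B B' x}, B ∈ P → B' ∈ P → x ∈ B → x ∈ B' → B = B'

noncomputable def mergeBlocks (P : Finset (Finset α)) (A B : Finset α) : Finset (Finset α) :=
  insert (A ∪ B) ((P.erase A).erase B)

variable {P : Finset (Finset α)} {A B D : Finset α}

theorem mem_mergeBlocks :
    D ∈ mergeBlocks P A B ↔ D = A ∪ B ∨ (D ≠ B ∧ D ≠ A ∧ D ∈ P) := by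
  simp only [mergeBlocks, mem_insert, mem_erase]

theorem exists_superset_mem_mergeBlocks (hD : D ∈ P) :
    ∃ D' ∈ mergeBlocks P A B, D ⊆ D' := by
  by_cases hAB : D = A ∨ D = B
  · refine ⟨A ∪ B, mem_mergeBlocks.2 (.inl rfl), ?_⟩
    rcases hAB with rfl | rfl
    exacts [subset_union_left, subset_union_right]
  · push Not at hAB
    exact ⟨D, mem_mergeBlocks.2 (.inr ⟨hAB.2, hAB.1, hD⟩), subset_rfl⟩

theorem IsPartition.mergeBlocks_of_mem (hP : IsPartition P) (hA : A ∈ P) (hB : B ∈ P) :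
    IsPartition (mergeBlocks P A B) where
  nonempty D hD := by
    rcases mem_mergeBlocks.1 hD with rfl | ⟨-, -, hD⟩
    exacts [(hP.nonempty A hA).mono subset_union_left, hP.nonempty D hD]
  exists_mem x := by
    obtain ⟨D, hD, hxD⟩ := hP.exists_mem x
    obtain ⟨D', hD', hDD'⟩ := exists_superset_mem_mergeBlocks (A := A) (B := B) hD
    exact ⟨D', hD', hDD' hxD⟩
  eq_of_mem {D₁ D₂ x} h₁ h₂ hx₁ hx₂ := by
    have old : ∀ {D}, D ≠ B → D ≠ A → D ∈ P → x ∈ D → x ∉ A ∪ B := by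
      intro D hDB hDA hD hxD hxAB
      rcases mem_union.1 hxAB with hxA | hxB
      exacts [hDA (hP.eq_of_mem hD hA hxD hxA), hDB (hP.eq_of_mem hD hB hxD hxB)]
    rcases mem_mergeBlocks.1 h₁ with rfl | ⟨hB₁, hA₁, h₁⟩ <;>
      rcases mem_mergeBlocks.1 h₂ with rfl | ⟨hB₂, hA₂, h₂⟩
    · rfl
    · exact absurd hx₁ (old hB₂ hA₂ h₂ hx₂)
    · exact absurd hx₂ (old hB₁ hA₁ h₁ hx₁)
    · exact hP.eq_of_mem h₁ h₂ hx₁ hx₂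

theorem IsPartition.card_mergeBlocks (hP : IsPartition P) (hA : A ∈ P) (hB : B ∈ P)
    (hAB : A ≠ B) : #(mergeBlocks P A B) + 1 = #P := by
  have hunion : A ∪ B ∉ (P.erase A).erase B := fun h => by
    obtain ⟨hne, hmem⟩ := mem_erase.1 (mem_of_mem_erase h)
    obtain ⟨a, ha⟩ := hP.nonempty A hA
    exact hne (hP.eq_of_mem hmem hA (mem_union_left B ha) ha)
  have hB' : B ∈ P.erase A := mem_erase.2 ⟨hAB.symm, hB⟩
  have h2 : 2 ≤ #P := one_lt_card.2 ⟨A, hA, B, hB, hAB⟩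
  rw [mergeBlocks, card_insert_of_notMem hunion, card_erase_of_mem hB', card_erase_of_mem hA]
  omega

end Partitions

section NonCrossing

variable {α : Type*}

def NonCrossing (B C : Finset α) : Prop :=
  B ⊆ C ∨ C ⊆ B ∨ Disjoint B C

variable {A B C : Finset α}

theorem nonCrossing_singleton (x : α) (C : Finset α) : NonCrossing {x} C := by
  by_cases hx : x ∈ C
  · exact .inl (singleton_subset_iff.2 hx)
  · exact .inr (.inr (disjoint_singleton_left.2 hx))

theorem NonCrossing.ssubset_of_mem (h : NonCrossing A C) {x : α} (hxA : x ∈ A) (hxC : x ∈ C)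
    (hCA : ¬C ⊆ A) : A ⊂ C := by
  rcases h with hAC | hCA' | hdisj
  · exact ssubset_of_subset_not_subset hAC hCA
  · exact absurd hCA' hCA
  · exact absurd hxC (disjoint_left.1 hdisj hxA)

theorem NonCrossing.union (hA : NonCrossing A C) (hB : NonCrossing B C)
    (hAC : A ⊂ C → A ∪ B ⊆ C) (hBC : B ⊂ C → A ∪ B ⊆ C) : NonCrossing (A ∪ B) C := by
  by_cases hCA : C ⊆ A
  · exact .inr (.inl (hCA.trans subset_union_left))
  by_cases hCB : C ⊆ B
  · exact .inr (.inl (hCB.trans subset_union_right))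
  by_cases hAd : Disjoint A C
  · by_cases hBd : Disjoint B C
    · exact .inr (.inr (disjoint_union_left.2 ⟨hAd, hBd⟩))
    obtain ⟨x, hxB, hxC⟩ := not_disjoint_iff.1 hBd
    exact .inl (hBC (hB.ssubset_of_mem hxB hxC hCB))
  obtain ⟨x, hxA, hxC⟩ := not_disjoint_iff.1 hAd
  exact .inl (hAC (hA.ssubset_of_mem hxA hxC hCA))

end NonCrossing

theorem card_le_of_isChain {α ι : Type*} [Fintype ι] [DecidableEq ι] (c : α → ι)
    {𝒜 : Finset (Finset α)} (hchain : IsChain (· ⊆ ·) (𝒜 : Set (Finset α)))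
    (hsat : ∀ B ∈ 𝒜, ∀ u ∈ B, ∀ y, c y = c u → y ∈ B) (htwo : ∀ B ∈ 𝒜, 1 < #(B.image c)) :
    #𝒜 ≤ Fintype.card ι - 1 := by
  have heq : ∀ B₁ ∈ 𝒜, ∀ B₂ ∈ 𝒜, B₁ ⊆ B₂ → #(B₂.image c) ≤ #(B₁.image c) → B₁ = B₂ := by
    intro B₁ hB₁ B₂ _ h12 hcard
    have himage := eq_of_subset_of_card_le (image_subset_image (f := c) h12) hcard
    refine Subset.antisymm h12 fun y hy => ?_
    obtain ⟨u, hu, hcu⟩ := mem_image.1 (himage ▸ mem_image_of_mem c hy)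
    exact hsat B₁ hB₁ u hu y hcu.symm
  calc #𝒜 ≤ #(Icc 2 (Fintype.card ι)) := by
        refine card_le_card_of_injOn (fun B => #(B.image c)) (fun B hB => ?_) ?_
        · exact mem_Icc.2 ⟨htwo B hB, card_le_univ _⟩
        · intro B₁ hB₁ B₂ hB₂ hcard
          rcases hchain.total hB₁ hB₂ with h12 | h21
          · exact heq B₁ hB₁ B₂ hB₂ h12 hcard.ge
          · exact (heq B₂ hB₂ B₁ hB₁ h21 hcard.le).symm
    _ = Fintype.card ι - 1 := by rw [Nat.card_Icc]; omega

section Metric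

variable {S : Type*} [MetricSpace S]

def IsNiceSet (C : Finset S) : Prop :=
  ∀ x ∈ C, ∀ y ∈ C, ∀ z ∉ C, dist y x < dist z x

def IsClosestPair (P : Finset (Finset S)) (A B : Finset S) : Prop :=
  A ∈ P ∧ B ∈ P ∧ A ≠ B ∧ ∃ a ∈ A, ∃ b ∈ B, ∀ A' ∈ P, ∀ B' ∈ P, A' ≠ B' →
    ∀ a' ∈ A', ∀ b' ∈ B', dist a b ≤ dist a' b'

variable {P : Finset (Finset S)} {A B C : Finset S}

theorem IsClosestPair.symm (h : IsClosestPair P A B) : IsClosestPair P B A := by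
  obtain ⟨hA, hB, hAB, a, ha, b, hb, hmin⟩ := h
  exact ⟨hB, hA, hAB.symm, b, hb, a, ha, fun A' hA' B' hB' hne a' ha' b' hb' =>
    dist_comm b a ▸ hmin A' hA' B' hB' hne a' ha' b' hb'⟩

theorem IsClosestPair.union_subset (h : IsClosestPair P A B) (hP : IsPartition P)
    (hPC : ∀ D ∈ P, NonCrossing D C) (hC : IsNiceSet C) (hAC : A ⊂ C) : A ∪ B ⊆ C := by
  obtain ⟨hA, hB, hAB, a, ha, b, hb, hmin⟩ := h
  have haC : a ∈ C := hAC.subset ha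
  have hbC : b ∈ C := by
    by_contra hbC
    obtain ⟨y, hyC, hyA⟩ := exists_of_ssubset hAC
    obtain ⟨D, hD, hyD⟩ := hP.exists_mem y
    have hDA : A ≠ D := fun h => hyA (h ▸ hyD)
    have hfar : dist a b ≤ dist a y := hmin A hA D hD hDA a ha y hyD
    have hnear : dist y a < dist b a := hC a haC y hyC b hbC
    rw [dist_comm y, dist_comm b] at hnear
    exact hfar.not_gt hnear
  refine Finset.union_subset hAC.subset ?_
  rcases hPC B hB with hBC | hCB | hdisj
  · exact hBC
  · exact absurd (hP.eq_of_mem hA hB ha (hCB haC)) hAB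
  · exact absurd hbC (disjoint_left.1 hdisj hb)

theorem IsClosestPair.nonCrossing_mergeBlocks (h : IsClosestPair P A B) (hP : IsPartition P)
    (hPC : ∀ D ∈ P, NonCrossing D C) (hC : IsNiceSet C) :
    ∀ D ∈ mergeBlocks P A B, NonCrossing D C := by
  intro D hD
  rcases mem_mergeBlocks.1 hD with rfl | ⟨-, -, hD⟩
  · refine (hPC A h.1).union (hPC B h.2.1) (h.union_subset hP hPC hC) fun hBC => ?_
    rw [union_comm]
    exact h.symm.union_subset hP hPC hC hBC
  · exact hPC D hD

theorem IsClosestPair.exists_superset_or_mem_mergeBlocks (h : IsClosestPair P A B)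
    (hP : IsPartition P) (hPC : ∀ D ∈ P, NonCrossing D C) (hC : IsNiceSet C)
    (hCne : C.Nonempty) {D : Finset S} (hD : D ∈ mergeBlocks P A B) (hCD : C ⊆ D) :
    (∃ D' ∈ P, C ⊆ D') ∨ C ∈ mergeBlocks P A B := by
  rcases mem_mergeBlocks.1 hD with rfl | ⟨-, -, hD⟩
  · by_cases hCA : C ⊆ A
    · exact .inl ⟨A, h.1, hCA⟩
    by_cases hCB : C ⊆ B
    · exact .inl ⟨B, h.2.1, hCB⟩
    refine .inr (mem_mergeBlocks.2 (.inl (Subset.antisymm hCD ?_)))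
    obtain ⟨x, hxC⟩ := hCne
    rcases mem_union.1 (hCD hxC) with hxA | hxB
    · exact h.union_subset hP hPC hC ((hPC A h.1).ssubset_of_mem hxA hxC hCA)
    · rw [union_comm]
      exact h.symm.union_subset hP hPC hC ((hPC B h.2.1).ssubset_of_mem hxB hxC hCB)
  · exact .inl ⟨D, hD, hCD⟩

end Metric

section Run

variable {S : Type*} [MetricSpace S] [Fintype S]

structure IsRun (P : ℕ → Finset (Finset S)) (n : ℕ) : Prop where
  zero : P 0 = univ.image fun x => {x}
  step : ∀ m, m + 1 < n → ∃ A B, IsClosestPair (P m) A B ∧ P (m + 1) = mergeBlocks (P m) A B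

namespace IsRun

variable {P : ℕ → Finset (Finset S)} {n : ℕ}

theorem mem_zero (run : IsRun P n) {D : Finset S} : D ∈ P 0 ↔ ∃ x, {x} = D := by
  simp [run.zero]

theorem isPartition (run : IsRun P n) : ∀ m < n, IsPartition (P m)
  | 0, _ => by
    refine ⟨fun D hD => ?_, fun x => ⟨{x}, run.mem_zero.2 ⟨x, rfl⟩, mem_singleton_self x⟩,
      fun {D D' x} hD hD' hxD hxD' => ?_⟩
    · obtain ⟨x, rfl⟩ := run.mem_zero.1 hD
      exact singleton_nonempty x
    · obtain ⟨y, rfl⟩ := run.mem_zero.1 hD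
      obtain ⟨y', rfl⟩ := run.mem_zero.1 hD'
      rw [← mem_singleton.1 hxD, ← mem_singleton.1 hxD']
  | m + 1, hm => by
    obtain ⟨A, B, hAB, hstep⟩ := run.step m hm
    rw [hstep]
    exact (run.isPartition m (by omega)).mergeBlocks_of_mem hAB.1 hAB.2.1

theorem card_add (run : IsRun P n) : ∀ m < n, #(P m) + m = Fintype.card S
  | 0, _ => by
    rw [run.zero, card_image_of_injective _ singleton_injective, card_univ, add_zero]
  | m + 1, hm => by
    obtain ⟨A, B, hAB, hstep⟩ := run.step m hm
    have := ((run.isPartition m (by omega)).card_mergeBlocks hAB.1 hAB.2.1 hAB.2.2.1)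
    rw [hstep, ← run.card_add m (by omega)]
    omega

theorem subset_of_le (run : IsRun P n) {m₁ m₂ : ℕ} (hm : m₁ ≤ m₂) (hm₂ : m₂ < n)
    {B₁ B₂ : Finset S} (hB₁ : B₁ ∈ P m₁) (hB₂ : B₂ ∈ P m₂) {x : S} (hx₁ : x ∈ B₁)
    (hx₂ : x ∈ B₂) : B₁ ⊆ B₂ := by
  induction m₂, hm using Nat.le_induction generalizing B₂ with
  | base => exact (run.isPartition m₁ hm₂).eq_of_mem hB₁ hB₂ hx₁ hx₂ ▸ subset_rfl
  | succ m hm ih =>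
    obtain ⟨D, hD, hxD⟩ := (run.isPartition m (by omega)).exists_mem x
    obtain ⟨A, B, -, hstep⟩ := run.step m hm₂
    obtain ⟨D', hD', hDD'⟩ := exists_superset_mem_mergeBlocks (A := A) (B := B) hD
    rw [← hstep] at hD'
    have hD'B₂ : D' = B₂ := (run.isPartition (m + 1) hm₂).eq_of_mem hD' hB₂ (hDD' hxD) hx₂
    exact hD'B₂ ▸ (ih (by omega) hD hxD).trans hDD'

theorem nonCrossing (run : IsRun P n) {C : Finset S} (hC : IsNiceSet C) :
    ∀ m < n, ∀ D ∈ P m, NonCrossing D C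
  | 0, _, D, hD => by
    obtain ⟨x, rfl⟩ := run.mem_zero.1 hD
    exact nonCrossing_singleton x C
  | m + 1, hm, D, hD => by
    obtain ⟨A, B, hAB, hstep⟩ := run.step m hm
    rw [hstep] at hD
    exact hAB.nonCrossing_mergeBlocks (run.isPartition m (by omega))
      (run.nonCrossing hC m (by omega)) hC D hD

theorem exists_mem_of_isNiceSet (run : IsRun P n) (hn : n = Fintype.card S) {C : Finset S}
    (hC : IsNiceSet C) (hCne : C.Nonempty) : ∃ m < n, C ∈ P m := by
  have formed : ∀ m < n, (∃ D ∈ P m, C ⊆ D) → ∃ m' ≤ m, C ∈ P m' := by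
    intro m
    induction m with
    | zero =>
      rintro - ⟨D, hD, hCD⟩
      obtain ⟨x, rfl⟩ := run.mem_zero.1 hD
      exact ⟨0, le_rfl, hCne.subset_singleton_iff.1 hCD ▸ hD⟩
    | succ m ih =>
      rintro hm ⟨D, hD, hCD⟩
      obtain ⟨A, B, hAB, hstep⟩ := run.step m hm
      rw [hstep] at hD
      rcases hAB.exists_superset_or_mem_mergeBlocks (run.isPartition m (by omega))
        (run.nonCrossing hC m (by omega)) hC hCne hD hCD with hold | hnew
      · obtain ⟨m', hm', hCm'⟩ := ih (by omega) hold
        exact ⟨m', by omega, hCm'⟩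
      · exact ⟨m + 1, le_rfl, hstep ▸ hnew⟩
  have hn₀ : 0 < n := hn ▸ Fintype.card_pos_iff.2 hCne.to_type
  obtain ⟨D, hD⟩ : ∃ D, P (n - 1) = {D} := by
    have := run.card_add (n - 1) (by omega)
    exact card_eq_one.1 (by omega)
  have hCD : C ⊆ D := fun x _ => by
    obtain ⟨D', hD', hxD'⟩ := (run.isPartition (n - 1) (by omega)).exists_mem x
    rw [hD, mem_singleton] at hD'
    exact hD' ▸ hxD'
  obtain ⟨m, hm, hCm⟩ := formed (n - 1) (by omega) ⟨D, hD ▸ mem_singleton_self D, hCD⟩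
  exact ⟨m, by omega, hCm⟩

theorem card_ssuperset_le (run : IsRun P n) {ι : Type*} [Fintype ι] [DecidableEq ι]
    (c : S → ι) (hc : ∀ j, IsNiceSet (univ.filter (c · = j))) (x : S) :
    #(((range n).biUnion P).filter (univ.filter (c · = c x) ⊂ ·)) ≤ Fintype.card ι - 1 := by
  set C := univ.filter (c · = c x)
  have hxC : x ∈ C := mem_filter.2 ⟨mem_univ x, rfl⟩
  refine card_le_of_isChain c ?_ ?_ ?_
  · rintro B₁ hB₁ B₂ hB₂ -
    simp only [coe_filter, mem_biUnion, mem_range, Set.mem_ofPred_eq] at hB₁ hB₂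
    obtain ⟨⟨m₁, hm₁, hB₁⟩, hCB₁⟩ := hB₁
    obtain ⟨⟨m₂, hm₂, hB₂⟩, hCB₂⟩ := hB₂
    rcases le_total m₁ m₂ with h | h
    · exact .inl (run.subset_of_le h hm₂ hB₁ hB₂ (hCB₁.subset hxC) (hCB₂.subset hxC))
    · exact .inr (run.subset_of_le h hm₁ hB₂ hB₁ (hCB₂.subset hxC) (hCB₁.subset hxC))
  · simp only [mem_filter, mem_biUnion, mem_range]
    rintro B ⟨⟨m, hm, hB⟩, hCB⟩ u hu y hy
    rcases run.nonCrossing (hc (c u)) m hm B hB with hsub | hsup | hdisj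
    · have hcx : c x = c u := (mem_filter.1 (hsub (hCB.subset hxC))).2
      rw [← hcx] at hsub
      exact absurd hsub hCB.not_subset
    · exact hsup (mem_filter.2 ⟨mem_univ y, hy⟩)
    · exact absurd (mem_filter.2 ⟨mem_univ u, rfl⟩ : u ∈ univ.filter (c · = c u))
        (disjoint_left.1 hdisj hu)
  · simp only [mem_filter]
    rintro B ⟨-, hCB⟩
    obtain ⟨z, hzB, hzC⟩ := exists_of_ssubset hCB
    refine one_lt_card.2 ⟨c x, mem_image_of_mem c (hCB.subset hxC), c z, mem_image_of_mem c hzB,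
      fun h => hzC (mem_filter.2 ⟨mem_univ z, h.symm⟩)⟩

end IsRun

end Run

end SingleLinkage

open SingleLinkage in
/-- The single-linkage execution is modelled by the sequence of partitions `P m`: `P 0` is
the partition into singletons, and `P (m+1)` is obtained from `P m` by merging a pair of
distinct blocks realizing the minimum inter-block distance. `blocks` is the set of all tree
nodes, the depth of a node is the number of blocks strictly containing it, and `rep` assigns
each node a point inside it. -/
theorem nice_clustering_in_single_linkage_tree_general
    {S : Type*} [MetricSpace S] [Fintype S]
    (k ℓ : ℕ) (hℓk : ℓ ≤ k)
    (c : S → Fin ℓ) (hsurj : Function.Surjective c)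
    (hnice : ∀ x y z : S, c x = c y → c x ≠ c z → dist y x < dist z x)
    (n : ℕ) (hn : n = Fintype.card S)
    (P : ℕ → Finset (Finset S))
    (hP0 : P 0 = Finset.univ.image (fun x : S => {x}))
    (hstep : ∀ m : ℕ, m + 1 < n → ∃ A B : Finset S, A ∈ P m ∧ B ∈ P m ∧ A ≠ B ∧
      (∃ a ∈ A, ∃ b ∈ B, ∀ A' ∈ P m, ∀ B' ∈ P m, A' ≠ B' →
        ∀ a' ∈ A', ∀ b' ∈ B', dist a b ≤ dist a' b') ∧
      P (m + 1) = insert (A ∪ B) (((P m).erase A).erase B))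
    (blocks : Finset (Finset S)) (hblocks : blocks = (Finset.range n).biUnion P)
    (depth : Finset S → ℕ)
    (hdepth : ∀ B : Finset S, depth B = (blocks.filter (fun B' => B ⊂ B')).card)
    (rep : Finset S → S) (hrep : ∀ B ∈ blocks, B.Nonempty → rep B ∈ B) :
    ∀ i : Fin ℓ, ∃ B ∈ blocks, (∀ x : S, x ∈ B ↔ c x = i) ∧ depth B < k ∧
      rep B ∈ B ∧ c (rep B) = i := by
  have run : IsRun P n := ⟨hP0, fun m hm => by
    obtain ⟨A, B, hA, hB, hAB, hmin, hstep⟩ := hstep m hm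
    exact ⟨A, B, ⟨hA, hB, hAB, hmin⟩, hstep⟩⟩
  have hclusters : ∀ j, IsNiceSet (Finset.univ.filter (c · = j)) := by
    intro j x hx y hy z hz
    simp only [Finset.mem_filter, Finset.mem_univ, true_and] at hx hy hz
    exact hnice x y z (hx.trans hy.symm) (hx.trans_ne (Ne.symm hz))
  intro i
  obtain ⟨x, rfl⟩ := hsurj i
  set C := Finset.univ.filter (c · = c x)
  have hC : ∀ y, y ∈ C ↔ c y = c x := by simp [C]
  have hCne : C.Nonempty := ⟨x, (hC x).2 rfl⟩
  obtain ⟨m, hm, hCm⟩ := run.exists_mem_of_isNiceSet hn (hclusters (c x)) hCne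
  have hCblocks : C ∈ blocks := hblocks ▸ Finset.mem_biUnion.2 ⟨m, Finset.mem_range.2 hm, hCm⟩
  have hdepthC : depth C < k := by
    have hℓ := (c x).pos
    calc depth C = (blocks.filter (C ⊂ ·)).card := hdepth C
      _ ≤ ℓ - 1 := by
        rw [hblocks, ← Fintype.card_fin ℓ]
        exact run.card_ssuperset_le c hclusters x
      _ < k := by omega
  have hrepC := hrep C hCblocks hCne
  exact ⟨C, hCblocks, hC, hdepthC, hrepC, (hC _).1 hrepC⟩

/-- every cluster of a nice `ℓ`-clustering (`ℓ ≤ k`) of a finite metric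
space `S` is a node of the single-linkage merge tree at depth `< k`; hence the output of
`Candidates` (one representative per node at depth `< k`) contains a representative of
every cluster.

The single-linkage execution is modelled by the sequence of partitions `P m`: `P 0` is
the partition into singletons, and `P (m+1)` is obtained from `P m` by merging a pair of
distinct blocks realizing the minimum inter-block (single-linkage) distance.  `blocks`
is the set of all tree nodes (all blocks ever formed), the depth of a node is the number
of blocks strictly containing it, and `rep` assigns each node a point inside it. -/
theorem nice_clustering_in_single_linkage_tree
    {S : Type*} [MetricSpace S] [Fintype S] [Nonempty S]
    (k ℓ : ℕ) (hℓk : ℓ ≤ k) (hℓ : 0 < ℓ)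
    (c : S → Fin ℓ) (hsurj : Function.Surjective c)
    (hnice : ∀ x y z : S, c x = c y → c x ≠ c z → dist y x < dist z x)
    (n : ℕ) (hn : n = Fintype.card S)
    (P : ℕ → Finset (Finset S))
    (hP0 : P 0 = Finset.univ.image (fun x : S => {x}))
    (hstep : ∀ m : ℕ, m + 1 < n → ∃ A B : Finset S, A ∈ P m ∧ B ∈ P m ∧ A ≠ B ∧
      (∃ a ∈ A, ∃ b ∈ B, ∀ A' ∈ P m, ∀ B' ∈ P m, A' ≠ B' →
        ∀ a' ∈ A', ∀ b' ∈ B', dist a b ≤ dist a' b') ∧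
      P (m + 1) = insert (A ∪ B) (((P m).erase A).erase B))
    (blocks : Finset (Finset S)) (hblocks : blocks = (Finset.range n).biUnion P)
    (depth : Finset S → ℕ)
    (hdepth : ∀ B : Finset S, depth B = (blocks.filter (fun B' => B ⊂ B')).card)
    (rep : Finset S → S) (hrep : ∀ B ∈ blocks, B.Nonempty → rep B ∈ B) :
    ∀ i : Fin ℓ, ∃ B ∈ blocks, (∀ x : S, x ∈ B ↔ c x = i) ∧ depth B < k ∧
      rep B ∈ B ∧ c (rep B) = i :=
  nice_clustering_in_single_linkage_tree_general k ℓ hℓk c hsurj hnice n hn P hP0 hstep blocks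
    hblocks depth hdepth rep hrep
end
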